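/- With F_{n,k}(a) = qBinom(n,k)·q^{k(k-1)/2}·(1-q^{2k}a)/((q^k a; q)_{n+1}), one has for all n ≥ 1 and 0 ≤ k ≤ n the recurrence F_{n,k}(a) = F_{n-1,k}(a)/(1-q^n a) + q^{n-1}·F_{n-1,k-1}(q² a)/(1-q^n a), where F_{n-1,-1} = 0, as rational functions in q and a. -/

import Mathlib

/-- Gaussian (q-)binomial coefficient, via the q-Pascal recurrence. -/
def qbinom {K : Type*} [CommRing K] (q : K) : ℕ → ℕ → K
  | _, 0 => 1
  | 0, _ + 1 => 0
  | n + 1, k + 1 => qbinom q n k + q ^ (k + 1) * qbinom q n (k + 1)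

/-- q-Pochhammer symbol `(c;q)_r = ∏_{j=0}^{r-1} (1 - c·q^j)`. -/
def qpoch {K : Type*} [CommRing K] (c q : K) (r : ℕ) : K :=
  ∏ j ∈ Finset.range r, (1 - c * q ^ j)

/-- The field of rational functions in the two variables `q` and `a` over `ℚ`. -/
noncomputable abbrev Kqa : Type := FractionRing (MvPolynomial (Fin 2) ℚ)

/-- The variable `q`. -/
noncomputable def qv : Kqa :=
  algebraMap (MvPolynomial (Fin 2) ℚ) Kqa (MvPolynomial.X 0)

/-- The variable `a`. -/
noncomputable def av : Kqa :=
  algebraMap (MvPolynomial (Fin 2) ℚ) Kqa (MvPolynomial.X 1)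

/-- `F_{n,k}(a)` from the paper. -/
noncomputable def Fqa (n k : ℕ) (a : Kqa) : Kqa :=
  qbinom qv n k * qv ^ (k * (k - 1) / 2) * (1 - qv ^ (2 * k) * a)
    / qpoch (qv ^ k * a) qv (n + 1)

section lemmas
variable {K : Type*} [CommRing K]

lemma qbinom_zero (q : K) (n : ℕ) : qbinom q n 0 = 1 := by cases n <;> rfl

lemma qbinom_succ (q : K) (n k : ℕ) :
    qbinom q (n+1) (k+1) = qbinom q n k + q ^ (k + 1) * qbinom q n (k + 1) := rfl

lemma qbinom_of_lt (q : K) : ∀ n k, n < k → qbinom q n k = 0 := by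
  intro n
  induction n with
  | zero => intro k hk; match k, hk with | k+1, _ => rfl
  | succ n ih =>
    intro k hk
    match k, hk with
    | k+1, hk =>
      rw [qbinom_succ, ih k (by omega), ih (k+1) (by omega)]; ring

lemma qbinom_self (q : K) (n : ℕ) : qbinom q n n = 1 := by
  induction n with
  | zero => rfl
  | succ n ih =>
    rw [qbinom_succ, ih, qbinom_of_lt q n (n+1) (by omega)]; ring

lemma qbinom_pascal2 (q : K) : ∀ n k, k ≤ n →
    qbinom q (n+1) (k+1) = qbinom q n (k+1) + q^(n-k) * qbinom q n k := by
  intro n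
  induction n with
  | zero =>
    intro k hk; interval_cases k
    rw [qbinom_succ]
    simp [qbinom_self, qbinom_of_lt q 0 1 (by omega), qbinom_zero]
  | succ n ih =>
    intro k hk
    rcases Nat.lt_or_ge k (n+1) with h | h
    · have hkn : k ≤ n := by omega
      match k with
      | 0 =>
        have h1 := ih 0 (by omega)
        conv_rhs => rw [qbinom_succ q n 0]
        conv_lhs => rw [qbinom_succ q (n+1) 0]
        rw [h1, qbinom_zero, qbinom_zero]
        have e : q ^ (n-0) * q ^ (0+1) = q ^ (n+1-0) := by rw [← pow_add]; congr 1
        linear_combination e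
      | j + 1 =>
        have h1 := ih j (by omega)
        have h2 := ih (j+1) hkn
        conv_rhs => rw [qbinom_succ q n (j+1), qbinom_succ q n j]
        conv_lhs => rw [qbinom_succ q (n+1) (j+1)]
        rw [h1, h2]
        have e1 : q ^ (n-j) = q ^ (n+1-(j+1)) := by congr 1; omega
        have e2 : q ^ (j+1+1) * q ^ (n-(j+1)) = q ^ (n+1-(j+1)) * q ^ (j+1) := by
          rw [← pow_add, ← pow_add]; congr 1; omega
        linear_combination qbinom q n j * e1 + qbinom q n (j+1) * e2
    · have hk1 : k = n + 1 := by omega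
      subst hk1
      rw [qbinom_self, qbinom_of_lt q (n+1) (n+2) (by omega), qbinom_self]
      simp

lemma qbinom_key (q a : K) (n k : ℕ) (hk1 : 1 ≤ k) (hk : k ≤ n) :
    qbinom q n k * (1 - q^n * a)
      = qbinom q (n-1) k * (1 - q^(n+k)*a) + q^(n-k) * (qbinom q (n-1) (k-1) * (1 - q^k * a)) := by
  obtain ⟨m, rfl⟩ : ∃ m, n = m + 1 := ⟨n - 1, by omega⟩
  obtain ⟨j, rfl⟩ : ∃ j, k = j + 1 := ⟨k - 1, by omega⟩
  simp only [Nat.add_sub_cancel]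
  have hj : j ≤ m := by omega
  have h1 := qbinom_pascal2 q m j hj
  have h2 := qbinom_succ q m j
  have e1 : q ^ (m-j) * q ^ (j+1) = q ^ (m+1) := by rw [← pow_add]; congr 1; omega
  have e2 : q ^ (m+1+(j+1)) = q ^ (m+1) * q ^ (j+1) := by rw [← pow_add]
  have e3 : q ^ (m+1-(j+1)) = q ^ (m-j) := by congr 1; omega
  set A := qbinom q m j
  linear_combination h1 - q^(m+1)*a*h2 + a * qbinom q m (j+1) * e2 + (-A + a*A*q^(j+1))*e3 + a*A*e1

lemma qpoch_succ (c q : K) (r : ℕ) :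
    qpoch c q (r+1) = qpoch c q r * (1 - c * q ^ r) :=
  Finset.prod_range_succ _ _

lemma qpoch_succ' (c q : K) (r : ℕ) :
    qpoch c q (r+1) = (1 - c) * qpoch (c*q) q r := by
  unfold qpoch
  rw [Finset.prod_range_succ']
  simp only [pow_zero, mul_one]
  rw [mul_comm]
  congr 1
  exact Finset.prod_congr rfl fun j _ => by rw [pow_succ]; ring

lemma tri (j : ℕ) : (j+1)*j/2 = j*(j-1)/2 + j := by
  have h1 := Finset.sum_range_id_mul_two (j+1)
  have h2 := Finset.sum_range_id_mul_two j
  have e1 : (j+1)*((j+1)-1)/2 = ∑ i ∈ Finset.range (j+1), i := by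
    rw [← h1, Nat.mul_div_cancel _ (by norm_num)]
  have e2 : j*(j-1)/2 = ∑ i ∈ Finset.range j, i := by
    rw [← h2, Nat.mul_div_cancel _ (by norm_num)]
  simp only [Nat.add_sub_cancel] at e1
  rw [e1, e2, Finset.sum_range_succ]

end lemmas

lemma one_sub_ne (m : ℕ) : (1 : Kqa) - qv ^ m * av ≠ 0 := by
  have h : (1 : Kqa) - qv ^ m * av
      = algebraMap (MvPolynomial (Fin 2) ℚ) Kqa (1 - MvPolynomial.X 0 ^ m * MvPolynomial.X 1) := by
    simp [qv, av, map_sub, map_mul, map_pow]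
  rw [h]
  intro hc
  have hinj := IsFractionRing.injective (MvPolynomial (Fin 2) ℚ) Kqa
  rw [map_eq_zero_iff _ hinj] at hc
  have := congrArg (MvPolynomial.eval (fun _ => (0:ℚ))) hc
  simp at this

lemma qpoch_ne (m r : ℕ) : qpoch (qv ^ m * av) qv r ≠ 0 := by
  unfold qpoch
  rw [Finset.prod_ne_zero_iff]
  intro j _
  have h : (1 : Kqa) - qv^m*av*qv^j = 1 - qv^(m+j)*av := by rw [pow_add]; ring
  rw [h]; exact one_sub_ne _

theorem super_catalan_stmt19 (n k : ℕ) (hn : 1 ≤ n) (hk : k ≤ n) :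
    Fqa n k av
      = Fqa (n - 1) k av / (1 - qv ^ n * av)
        + qv ^ (n - 1) * (if k = 0 then 0 else Fqa (n - 1) (k - 1) (qv ^ 2 * av))
            / (1 - qv ^ n * av) := by
  obtain ⟨m, rfl⟩ : ∃ m, n = m + 1 := ⟨n - 1, by omega⟩
  simp only [Nat.add_sub_cancel]
  match k with
  | 0 =>
    rw [if_pos rfl, mul_zero, zero_div, add_zero]
    unfold Fqa
    rw [qbinom_zero, qbinom_zero]
    simp only [Nat.zero_mul, Nat.zero_div, pow_zero, one_mul, mul_zero, Nat.mul_zero]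
    have hP : qpoch av qv (m+1) ≠ 0 := by
      have := qpoch_ne 0 (m+1); rwa [pow_zero, one_mul] at this
    have hG : (1:Kqa) - qv^(m+1)*av ≠ 0 := one_sub_ne (m+1)
    rw [qpoch_succ av qv (m+1), show (1:Kqa) - av * qv^(m+1) = 1 - qv^(m+1)*av by ring]
    field_simp
  | j + 1 =>
    simp only [if_neg (Nat.succ_ne_zero j), Nat.add_sub_cancel]
    unfold Fqa
    simp only [Nat.add_sub_cancel]
    -- rewrite the shifted argument pieces
    have rA : qpoch (qv^j*(qv^2*av)) qv (m+1) = qpoch (qv^(j+2)*av) qv (m+1) := by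
      congr 1; ring
    have rB : (1:Kqa) - qv^(2*j)*(qv^2*av) = 1 - qv^(2*(j+1))*av := by
      ring
    rw [rA, rB]
    -- split big pochhammer two ways
    have rP : qpoch (qv^(j+1)*av) qv (m+1+1)
        = qpoch (qv^(j+1)*av) qv (m+1) * (1 - qv^(m+1+(j+1))*av) := by
      rw [qpoch_succ]; congr 2; ring
    have rC : qpoch (qv^(j+1)*av) qv (m+1+1)
        = (1 - qv^(j+1)*av) * qpoch (qv^(j+2)*av) qv (m+1) := by
      rw [qpoch_succ']; congr 2; ring
    have hPQ : qpoch (qv^(j+1)*av) qv (m+1) * (1 - qv^(m+1+(j+1))*av)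
        = (1 - qv^(j+1)*av) * qpoch (qv^(j+2)*av) qv (m+1) := rP.symm.trans rC
    rw [rP]
    have rE : qv^m * qv^(j*(j-1)/2) = qv^((j+1)*j/2) * qv^(m+1-(j+1)) := by
      rw [← pow_add, ← pow_add]; congr 1; rw [tri j]; omega
    have key := qbinom_key qv av (m+1) (j+1) (by omega) hk
    simp only [Nat.add_sub_cancel] at key
    have hP : qpoch (qv^(j+1)*av) qv (m+1) ≠ 0 := qpoch_ne (j+1) (m+1)
    have hQ : qpoch (qv^(j+2)*av) qv (m+1) ≠ 0 := qpoch_ne (j+2) (m+1)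
    have hG : (1:Kqa) - qv^(m+1)*av ≠ 0 := one_sub_ne (m+1)
    have hCn : (1:Kqa) - qv^(m+1+(j+1))*av ≠ 0 := one_sub_ne (m+1+(j+1))
    have hC0 : (1:Kqa) - qv^(j+1)*av ≠ 0 := one_sub_ne (j+1)
    set P := qpoch (qv^(j+1)*av) qv (m+1)
    set Q := qpoch (qv^(j+2)*av) qv (m+1)
    set B3 := qbinom qv m j
    set E := (qv : Kqa)^((j+1)*j/2)
    set N := (1:Kqa) - qv^(2*(j+1))*av
    set Cn := (1:Kqa) - qv^(m+1+(j+1))*av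
    set C0 := (1:Kqa) - qv^(j+1)*av
    set G := (1:Kqa) - qv^(m+1)*av
    field_simp
    linear_combination (E*N*Q)*key - (N*Cn*P*B3)*rE - (N*B3*E*qv^(m+1-(j+1)))*hPQ
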